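/- arXiv:1110.4753 — 2 statements merged into one kernel-verified Lean document; each statement's English description precedes it below -/
import Mathlib

section
/- Any two reduced decompositions of a permutation σ ∈ S_n into elementary transpositions can be transformed into each other by a sequence of braid (hexagonal) moves (i, i+1, i) ↝ (i+1, i, i+1) and commutation (square) moves (i,j) ↝ (j,i) for |i−j| ≥ 2 (Matsumoto's theorem for S_n). -/
/-- The product of the word `w` of elementary transpositions: the letter `i : Fin (n-1)`
stands for the elementary transposition `σᵢ = (i, i+1)` in `S_n`. -/
def wordProd {n : ℕ} (w : List (Fin (n - 1))) : Equiv.Perm (Fin n) :=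
  (w.map fun i => Equiv.swap (Fin.castLE (Nat.sub_le n 1) i)
    ⟨(i : ℕ) + 1, by omega⟩).prod

/-- `w` is a reduced decomposition of `σ`: it multiplies to `σ` and has minimal length. -/
def IsReducedWord {n : ℕ} (σ : Equiv.Perm (Fin n)) (w : List (Fin (n - 1))) : Prop :=
  wordProd w = σ ∧ ∀ w' : List (Fin (n - 1)), wordProd w' = σ → w.length ≤ w'.length

/-- A single braid (hexagonal) move `(…, i, i±1, i, …) ↝ (…, i±1, i, i±1, …)` or
commutation (square) move `(…, i, j, …) ↝ (…, j, i, …)` for `|i−j| ≥ 2`. -/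
def BraidOrCommMove {n : ℕ} (w w' : List (Fin (n - 1))) : Prop :=
  (∃ (l r : List (Fin (n - 1))) (i j : Fin (n - 1)),
      ((j : ℕ) = (i : ℕ) + 1 ∨ (i : ℕ) = (j : ℕ) + 1) ∧
      w = l ++ [i, j, i] ++ r ∧ w' = l ++ [j, i, j] ++ r) ∨
  (∃ (l r : List (Fin (n - 1))) (i j : Fin (n - 1)),
      ((i : ℕ) + 2 ≤ (j : ℕ) ∨ (j : ℕ) + 2 ≤ (i : ℕ)) ∧
      w = l ++ [i, j] ++ r ∧ w' = l ++ [j, i] ++ r)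

/-! The number of inversions of `σ` is its length: left multiplication by `σᵢ` changes it by
exactly one, and lowers it iff `i` is a left descent of `σ`. Hence a reduced word of `σ` is a left
descent followed by a reduced word of `σᵢ σ`, and we induct on the length. Reduced words with the
same first letter are connected by induction. If they start with distinct descents `i` and `j`,
then `σ` also has reduced words `i j i u` and `j i j u` (when `|i - j| = 1`) or `i j u` and
`j i u` (when `|i - j| ≥ 2`), which differ by one move, and induction connects each given word
to the one of these with the same first letter. -/

open Finset Relation

namespace Equiv

theorem swap_apply_lt_swap_apply_iff {α : Type*} [LinearOrder α] {a b u v : α} (hab : a ⋖ b)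
    (h₁ : ¬(u = a ∧ v = b)) (h₂ : ¬(u = b ∧ v = a)) : swap a b u < swap a b v ↔ u < v := by
  have hlt := hab.lt
  have below : ∀ c, c < b → c ≤ a := fun _ => hab.le_of_lt
  have above : ∀ c, a < c → b ≤ c := fun _ => hab.ge_of_gt
  grind

namespace Perm

section Inversions

variable {α : Type*} [LinearOrder α] [Fintype α]

def invSet (σ : Perm α) : Finset (α × α) := {p | p.1 < p.2 ∧ σ p.2 < σ p.1}

def invCount (σ : Perm α) : ℕ := #(invSet σ)

@[simp] theorem mem_invSet {σ : Perm α} {p : α × α} : p ∈ invSet σ ↔ p.1 < p.2 ∧ σ p.2 < σ p.1 := by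
  simp [invSet]

theorem invCount_one : invCount (1 : Perm α) = 0 := by
  rw [invCount, card_eq_zero, invSet, filter_eq_empty_iff]
  exact fun p _ h => lt_asymm h.1 h.2

theorem invSet_swap_mul_of_lt {a b : α} (hab : a ⋖ b) {σ : Perm α} (h : σ⁻¹ a < σ⁻¹ b) :
    invSet (swap a b * σ) = insert (σ⁻¹ a, σ⁻¹ b) (invSet σ) := by
  obtain ⟨p, rfl⟩ := σ.surjective a
  obtain ⟨q, rfl⟩ := σ.surjective b
  simp only [coe_inv, symm_apply_apply] at h ⊢
  ext ⟨x, y⟩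
  simp only [mem_invSet, mul_apply, mem_insert, Prod.mk.injEq]
  by_cases hpq : x = p ∧ y = q
  · obtain ⟨rfl, rfl⟩ := hpq
    simp [h, hab.lt]
  by_cases hqp : x = q ∧ y = p
  · obtain ⟨rfl, rfl⟩ := hqp
    simp [h.not_gt, h.ne']
  rw [swap_apply_lt_swap_apply_iff hab (by simpa [and_comm] using hqp)
    (by simpa [and_comm] using hpq)]
  simp [hpq]

theorem invCount_swap_mul_of_lt {a b : α} (hab : a ⋖ b) {σ : Perm α} (h : σ⁻¹ a < σ⁻¹ b) :
    invCount (swap a b * σ) = invCount σ + 1 := by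
  rw [invCount, invSet_swap_mul_of_lt hab h, card_insert_of_notMem]
  · rfl
  · simp [hab.lt.le]

theorem invCount_swap_mul_of_gt {a b : α} (hab : a ⋖ b) {σ : Perm α} (h : σ⁻¹ b < σ⁻¹ a) :
    invCount (swap a b * σ) + 1 = invCount σ := by
  have h' : (swap a b * σ)⁻¹ a < (swap a b * σ)⁻¹ b := by simpa [swap_inv] using h
  simpa using (invCount_swap_mul_of_lt hab h').symm

end Inversions

section AdjacentTranspositions

variable {n : ℕ}

def adjLow (i : Fin (n - 1)) : Fin n := ⟨i, by omega⟩

def adjHigh (i : Fin (n - 1)) : Fin n := ⟨i + 1, by omega⟩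

def adjSwap (i : Fin (n - 1)) : Perm (Fin n) := swap (adjLow i) (adjHigh i)

@[simp] theorem val_adjLow (i : Fin (n - 1)) : (adjLow i : ℕ) = i := rfl

@[simp] theorem val_adjHigh (i : Fin (n - 1)) : (adjHigh i : ℕ) = i + 1 := rfl

theorem adjLow_covBy_adjHigh (i : Fin (n - 1)) : adjLow i ⋖ adjHigh i := by
  simp [Fin.covBy_iff]

theorem adjLow_ne_adjHigh (i : Fin (n - 1)) : adjLow i ≠ adjHigh i :=
  (adjLow_covBy_adjHigh i).lt.ne

@[simp] theorem adjSwap_inv (i : Fin (n - 1)) : (adjSwap i)⁻¹ = adjSwap i := swap_inv _ _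

@[simp] theorem adjSwap_mul_adjSwap_mul (i : Fin (n - 1)) (σ : Perm (Fin n)) :
    adjSwap i * (adjSwap i * σ) = σ := swap_mul_self_mul _ _ _

theorem adjSwap_apply_adjLow (i : Fin (n - 1)) : adjSwap i (adjLow i) = adjHigh i :=
  swap_apply_left _ _

theorem adjSwap_apply_of_ne {i : Fin (n - 1)} {x : Fin n} (h₁ : (x : ℕ) ≠ i)
    (h₂ : (x : ℕ) ≠ i + 1) : adjSwap i x = x :=
  swap_apply_of_ne_of_ne (by simpa [Fin.ext_iff]) (by simpa [Fin.ext_iff])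

theorem adjSwap_mul_comm {i j : Fin (n - 1)} (h : (i : ℕ) + 2 ≤ j ∨ (j : ℕ) + 2 ≤ i) :
    adjSwap i * adjSwap j = adjSwap j * adjSwap i := by
  ext x
  simp only [adjSwap, mul_apply, swap_apply_def]
  split_ifs <;> simp only [Fin.ext_iff, val_adjLow, val_adjHigh] at * <;> omega

theorem adjSwap_mul_adjSwap_mul_adjSwap (i j : Fin (n - 1)) :
    adjSwap i * adjSwap j * adjSwap i = swap (adjSwap i (adjLow j)) (adjSwap i (adjHigh j)) := by
  rw [swap_apply_apply, adjSwap_inv]; rfl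

theorem adjHigh_eq_adjLow {i j : Fin (n - 1)} (h : (j : ℕ) = i + 1) : adjHigh i = adjLow j :=
  Fin.ext (by simp [h])

theorem adjSwap_apply_adjLow_of_succ {i j : Fin (n - 1)} (h : (j : ℕ) = i + 1) :
    adjSwap i (adjLow j) = adjLow i := by
  rw [← adjHigh_eq_adjLow h]; exact swap_apply_right _ _

theorem adjSwap_apply_adjHigh_of_succ {i j : Fin (n - 1)} (h : (j : ℕ) = i + 1) :
    adjSwap i (adjHigh j) = adjHigh j :=
  adjSwap_apply_of_ne (by simp; omega) (by simp; omega)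

theorem adjSwap_succ_apply_adjLow {i j : Fin (n - 1)} (h : (j : ℕ) = i + 1) :
    adjSwap j (adjLow i) = adjLow i :=
  adjSwap_apply_of_ne (by simp; omega) (by simp; omega)

theorem adjSwap_succ_apply_adjHigh {i j : Fin (n - 1)} (h : (j : ℕ) = i + 1) :
    adjSwap j (adjHigh i) = adjHigh j := by
  rw [adjHigh_eq_adjLow h]; exact swap_apply_left _ _

theorem adjSwap_braid {i j : Fin (n - 1)} (h : (j : ℕ) = i + 1) :
    adjSwap i * adjSwap j * adjSwap i = adjSwap j * adjSwap i * adjSwap j := by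
  rw [adjSwap_mul_adjSwap_mul_adjSwap, adjSwap_mul_adjSwap_mul_adjSwap,
    adjSwap_apply_adjLow_of_succ h, adjSwap_apply_adjHigh_of_succ h, adjSwap_succ_apply_adjLow h,
    adjSwap_succ_apply_adjHigh h]

end AdjacentTranspositions

section Descents

variable {n : ℕ} {σ : Perm (Fin n)} {i j : Fin (n - 1)}

/-- `σ⁻¹ x` is the position of `x` in the one-line notation of `σ`: `i` is a left descent when
`i + 1` occurs before `i`. -/
def IsLeftDescent (σ : Perm (Fin n)) (i : Fin (n - 1)) : Prop := σ⁻¹ (adjHigh i) < σ⁻¹ (adjLow i)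

theorem not_isLeftDescent_iff : ¬IsLeftDescent σ i ↔ σ⁻¹ (adjLow i) < σ⁻¹ (adjHigh i) :=
  not_lt.trans (σ⁻¹.injective.ne (adjLow_ne_adjHigh i)).le_iff_lt

theorem invCount_adjSwap_mul_of_isLeftDescent (h : IsLeftDescent σ i) :
    invCount (adjSwap i * σ) + 1 = invCount σ :=
  invCount_swap_mul_of_gt (adjLow_covBy_adjHigh i) h

theorem invCount_adjSwap_mul_of_not_isLeftDescent (h : ¬IsLeftDescent σ i) :
    invCount (adjSwap i * σ) = invCount σ + 1 :=
  invCount_swap_mul_of_lt (adjLow_covBy_adjHigh i) (not_isLeftDescent_iff.1 h)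

theorem invCount_adjSwap_mul_le (σ : Perm (Fin n)) (i : Fin (n - 1)) :
    invCount (adjSwap i * σ) ≤ invCount σ + 1 := by
  by_cases h : IsLeftDescent σ i
  · have := invCount_adjSwap_mul_of_isLeftDescent h; omega
  · exact (invCount_adjSwap_mul_of_not_isLeftDescent h).le

theorem exists_isLeftDescent (hσ : σ ≠ 1) : ∃ i, IsLeftDescent σ i := by
  by_contra! h
  obtain _ | m := n
  · exact hσ (Subsingleton.elim _ _)
  have hmono : StrictMono ⇑σ⁻¹ :=
    Fin.strictMono_iff_lt_succ.2 fun i => not_isLeftDescent_iff.1 (h i)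
  exact hσ (inv_eq_one.1 (Equiv.ext fun x => hmono.apply_eq))

theorem inv_adjSwap_mul_apply (x : Fin n) : (adjSwap i * σ)⁻¹ x = σ⁻¹ (adjSwap i x) := by
  simp [mul_inv_rev]

theorem IsLeftDescent.adjSwap_mul_of_far (hij : (i : ℕ) + 2 ≤ j ∨ (j : ℕ) + 2 ≤ i)
    (hj : IsLeftDescent σ j) : IsLeftDescent (adjSwap i * σ) j := by
  rwa [IsLeftDescent, inv_adjSwap_mul_apply, inv_adjSwap_mul_apply,
    adjSwap_apply_of_ne (by simp; omega) (by simp; omega),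
    adjSwap_apply_of_ne (x := adjLow j) (by simp; omega) (by simp; omega)]

theorem IsLeftDescent.adjSwap_mul_of_succ (h : (j : ℕ) = i + 1) (hi : IsLeftDescent σ i)
    (hj : IsLeftDescent σ j) : IsLeftDescent (adjSwap i * σ) j := by
  rw [IsLeftDescent, inv_adjSwap_mul_apply, inv_adjSwap_mul_apply,
    adjSwap_apply_adjLow_of_succ h, adjSwap_apply_adjHigh_of_succ h]
  rw [IsLeftDescent, adjHigh_eq_adjLow h] at hi
  exact hj.trans hi

theorem IsLeftDescent.adjSwap_mul_adjSwap_mul_of_succ (h : (j : ℕ) = i + 1)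
    (hj : IsLeftDescent σ j) : IsLeftDescent (adjSwap j * (adjSwap i * σ)) i := by
  rw [IsLeftDescent, inv_adjSwap_mul_apply, inv_adjSwap_mul_apply, inv_adjSwap_mul_apply,
    inv_adjSwap_mul_apply, adjSwap_succ_apply_adjHigh h, adjSwap_succ_apply_adjLow h,
    adjSwap_apply_adjHigh_of_succ h, adjSwap_apply_adjLow, adjHigh_eq_adjLow h]
  exact hj

end Descents

end Perm

end Equiv

open Equiv Perm

section ReducedWords

variable {n : ℕ} {σ : Perm (Fin n)} {i : Fin (n - 1)} {u w w' : List (Fin (n - 1))}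

theorem wordProd_cons (i : Fin (n - 1)) (w : List (Fin (n - 1))) :
    wordProd (i :: w) = adjSwap i * wordProd w := rfl

theorem invCount_wordProd_le (w : List (Fin (n - 1))) : invCount (wordProd w) ≤ w.length := by
  induction w with
  | nil => exact invCount_one.le
  | cons i w ih =>
    rw [wordProd_cons, List.length_cons]
    exact (invCount_adjSwap_mul_le _ i).trans (by omega)

theorem exists_wordProd_eq_length_eq_invCount (σ : Perm (Fin n)) :
    ∃ w, wordProd w = σ ∧ w.length = invCount σ := by
  by_cases hσ : σ = 1
  · exact ⟨[], hσ.symm, by rw [hσ, invCount_one]; rfl⟩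
  obtain ⟨i, hi⟩ := exists_isLeftDescent hσ
  have hlt := invCount_adjSwap_mul_of_isLeftDescent hi
  obtain ⟨w, hw, hlen⟩ := exists_wordProd_eq_length_eq_invCount (adjSwap i * σ)
  exact ⟨i :: w, by rw [wordProd_cons, hw, adjSwap_mul_adjSwap_mul],
    by rw [List.length_cons, hlen, hlt]⟩
termination_by invCount σ
decreasing_by omega

theorem isReducedWord_iff : IsReducedWord σ w ↔ wordProd w = σ ∧ w.length = invCount σ := by
  refine ⟨fun ⟨hw, hmin⟩ => ⟨hw, le_antisymm ?_ (hw ▸ invCount_wordProd_le w)⟩,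
    fun ⟨hw, hlen⟩ => ⟨hw, fun w' hw' => hlen ▸ hw' ▸ invCount_wordProd_le w'⟩⟩
  obtain ⟨v, hv, hlen⟩ := exists_wordProd_eq_length_eq_invCount σ
  exact hlen ▸ hmin v hv

theorem IsReducedWord.length_eq (h : IsReducedWord σ w) : w.length = invCount σ :=
  (isReducedWord_iff.1 h).2

theorem IsReducedWord.of_wordProd_eq (h : IsReducedWord σ w) (hprod : wordProd w' = wordProd w)
    (hlen : w'.length = w.length) : IsReducedWord σ w' :=
  ⟨hprod.trans h.1, hlen ▸ h.2⟩

theorem exists_isReducedWord (σ : Perm (Fin n)) : ∃ w, IsReducedWord σ w :=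
  (exists_wordProd_eq_length_eq_invCount σ).imp fun _ => isReducedWord_iff.2

theorem isReducedWord_cons_iff :
    IsReducedWord σ (i :: u) ↔ IsLeftDescent σ i ∧ IsReducedWord (adjSwap i * σ) u := by
  simp only [isReducedWord_iff, wordProd_cons, List.length_cons]
  constructor
  · rintro ⟨hprod, hlen⟩
    have hu : wordProd u = adjSwap i * σ := by rw [← hprod, adjSwap_mul_adjSwap_mul]
    have hle := hu ▸ invCount_wordProd_le u
    have hi : IsLeftDescent σ i := by
      by_contra hi
      have := invCount_adjSwap_mul_of_not_isLeftDescent hi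
      omega
    have := invCount_adjSwap_mul_of_isLeftDescent hi
    exact ⟨hi, hu, by omega⟩
  · rintro ⟨hi, hu, hlen⟩
    rw [hu, adjSwap_mul_adjSwap_mul, hlen, invCount_adjSwap_mul_of_isLeftDescent hi]
    exact ⟨rfl, rfl⟩

end ReducedWords

section Moves

variable {n : ℕ} {σ : Perm (Fin n)} {i j : Fin (n - 1)} {u v : List (Fin (n - 1))}

theorem BraidOrCommMove.symm (h : BraidOrCommMove u v) : BraidOrCommMove v u := by
  rcases h with ⟨l, r, i, j, hij, rfl, rfl⟩ | ⟨l, r, i, j, hij, rfl, rfl⟩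
  · exact .inl ⟨l, r, j, i, hij.symm, rfl, rfl⟩
  · exact .inr ⟨l, r, j, i, hij.symm, rfl, rfl⟩

theorem BraidOrCommMove.cons (a : Fin (n - 1)) (h : BraidOrCommMove u v) :
    BraidOrCommMove (a :: u) (a :: v) := by
  rcases h with ⟨l, r, i, j, hij, rfl, rfl⟩ | ⟨l, r, i, j, hij, rfl, rfl⟩
  · exact .inl ⟨a :: l, r, i, j, hij, rfl, rfl⟩
  · exact .inr ⟨a :: l, r, i, j, hij, rfl, rfl⟩

theorem reflTransGen_braidOrCommMove_cons (a : Fin (n - 1))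
    (h : ReflTransGen BraidOrCommMove u v) : ReflTransGen BraidOrCommMove (a :: u) (a :: v) :=
  ReflTransGen.lift (List.cons a) (fun _ _ => BraidOrCommMove.cons a) _ _ h

theorem exists_braidOrCommMove_of_isLeftDescent (hij : i ≠ j) (hi : IsLeftDescent σ i)
    (hj : IsLeftDescent σ j) : ∃ u v, IsReducedWord σ (i :: u) ∧ IsReducedWord σ (j :: v) ∧
      BraidOrCommMove (i :: u) (j :: v) := by
  wlog hlt : (i : ℕ) < j generalizing i j
  · obtain ⟨v, u, hv, hu, hmove⟩ := this hij.symm hj hi (by omega)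
    exact ⟨u, v, hu, hv, hmove.symm⟩
  rcases (by omega : (j : ℕ) = i + 1 ∨ (i : ℕ) + 2 ≤ j) with hsucc | hfar
  · obtain ⟨u, hu⟩ := exists_isReducedWord (adjSwap i * (adjSwap j * (adjSwap i * σ)))
    have hwiji : IsReducedWord σ (i :: j :: i :: u) := by
      simp only [isReducedWord_cons_iff]
      exact ⟨hi, hi.adjSwap_mul_of_succ hsucc hj, hj.adjSwap_mul_adjSwap_mul_of_succ hsucc, hu⟩
    have hwjij : IsReducedWord σ (j :: i :: j :: u) :=
      hwiji.of_wordProd_eq (by simp only [wordProd_cons, ← mul_assoc, adjSwap_braid hsucc]) rfl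
    exact ⟨_, _, hwiji, hwjij, .inl ⟨[], u, i, j, .inl hsucc, rfl, rfl⟩⟩
  · obtain ⟨u, hu⟩ := exists_isReducedWord (adjSwap j * (adjSwap i * σ))
    have hwij : IsReducedWord σ (i :: j :: u) := by
      simp only [isReducedWord_cons_iff]
      exact ⟨hi, hj.adjSwap_mul_of_far (.inl hfar), hu⟩
    have hwji : IsReducedWord σ (j :: i :: u) :=
      hwij.of_wordProd_eq
        (by simp only [wordProd_cons, ← mul_assoc, adjSwap_mul_comm (.inl hfar)]) rfl
    exact ⟨_, _, hwij, hwji, .inr ⟨[], u, i, j, .inl hfar, rfl, rfl⟩⟩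

end Moves

/-- Matsumoto's theorem for `S_n`: any two reduced decompositions of a permutation
`σ ∈ S_n` into elementary transpositions are connected by a sequence of braid
(hexagonal) moves and commutation (square) moves. -/
theorem matsumoto (n : ℕ) (σ : Equiv.Perm (Fin n)) (w w' : List (Fin (n - 1)))
    (hw : IsReducedWord σ w) (hw' : IsReducedWord σ w') :
    Relation.ReflTransGen BraidOrCommMove w w' := by
  obtain ⟨k, hk⟩ : ∃ k, invCount σ = k := ⟨_, rfl⟩
  induction k generalizing σ w w' with
  | zero =>
    rw [List.eq_nil_of_length_eq_zero (hw.length_eq.trans hk),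
      List.eq_nil_of_length_eq_zero (hw'.length_eq.trans hk)]
  | succ k ih =>
    have same_head {i u v} (hu : IsReducedWord σ (i :: u)) (hv : IsReducedWord σ (i :: v)) :
        ReflTransGen BraidOrCommMove (i :: u) (i :: v) := by
      rw [isReducedWord_cons_iff] at hu hv
      have := invCount_adjSwap_mul_of_isLeftDescent hu.1
      exact reflTransGen_braidOrCommMove_cons i (ih _ _ _ hu.2 hv.2 (by omega))
    obtain ⟨i, u, rfl⟩ := List.exists_cons_of_length_eq_add_one (hw.length_eq.trans hk)
    obtain ⟨j, u', rfl⟩ := List.exists_cons_of_length_eq_add_one (hw'.length_eq.trans hk)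
    by_cases hij : i = j
    · subst hij
      exact same_head hw hw'
    obtain ⟨v, v', hv, hv', hmove⟩ := exists_braidOrCommMove_of_isLeftDescent hij
      (isReducedWord_cons_iff.1 hw).1 (isReducedWord_cons_iff.1 hw').1
    exact (same_head hw hv).trans (.head hmove (same_head hv' hw'))
end

section
/- For any two sequences of hexagonal and square moves transforming a reduced word i of σ ∈ S_n into another reduced word i′, the number of square moves used has the same parity. -/
/-- A hexagonal (braid) move `(…, i, i±1, i, …) ↝ (…, i±1, i, i±1, …)`. -/
def HexMove {n : ℕ} (w w' : List (Fin (n - 1))) : Prop :=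
  ∃ (l r : List (Fin (n - 1))) (i j : Fin (n - 1)),
    ((j : ℕ) = (i : ℕ) + 1 ∨ (i : ℕ) = (j : ℕ) + 1) ∧
    w = l ++ [i, j, i] ++ r ∧ w' = l ++ [j, i, j] ++ r

/-- A square (commutation) move `(…, i, j, …) ↝ (…, j, i, …)` for `|i−j| ≥ 2`. -/
def SqMove {n : ℕ} (w w' : List (Fin (n - 1))) : Prop :=
  ∃ (l r : List (Fin (n - 1))) (i j : Fin (n - 1)),
    ((i : ℕ) + 2 ≤ (j : ℕ) ∨ (j : ℕ) + 2 ≤ (i : ℕ)) ∧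
    w = l ++ [i, j] ++ r ∧ w' = l ++ [j, i] ++ r

/-- `MoveSeq w w' m`: a sequence of hexagonal and square moves transforming `w`
into `w'` using exactly `m` square moves. -/
inductive MoveSeq {n : ℕ} : List (Fin (n - 1)) → List (Fin (n - 1)) → ℕ → Prop
  | refl (w : List (Fin (n - 1))) : MoveSeq w w 0
  | hex {w w' w'' : List (Fin (n - 1))} {m : ℕ} :
      HexMove w w' → MoveSeq w' w'' m → MoveSeq w w'' m
  | sq {w w' w'' : List (Fin (n - 1))} {m : ℕ} :
      SqMove w w' → MoveSeq w' w'' m → MoveSeq w w'' (m + 1)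


section Aux
open CliffordAlgebra


noncomputable def Qf (n : ℕ) : QuadraticForm ℚ (Fin n → ℚ) :=
  QuadraticMap.weightedSumSquares ℚ (fun _ : Fin n => (1:ℚ))

noncomputable def uvec {n : ℕ} (i : Fin (n-1)) : Fin n → ℚ :=
  Pi.single (Fin.castLE (Nat.sub_le n 1) i) 1 - Pi.single ⟨(i:ℕ)+1, by omega⟩ 1

lemma uvec_apply {n : ℕ} (i : Fin (n-1)) (k : Fin n) :
    uvec i k = (if (k:ℕ) = (i:ℕ) then 1 else 0) - (if (k:ℕ) = (i:ℕ)+1 then 1 else 0) := by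
  simp [uvec, Pi.single_apply, Fin.ext_iff, eq_comm]

lemma Qf_uvec {n : ℕ} (i : Fin (n-1)) : Qf n (uvec i) = 2 := by
  have hi : (i:ℕ) + 1 < n := by omega
  rw [Qf, QuadraticMap.weightedSumSquares_apply]
  have h : ∀ k : Fin n, (1:ℚ) • (uvec i k * uvec i k)
      = (if k = (⟨(i:ℕ), by omega⟩ : Fin n) then 1 else 0) + (if k = (⟨(i:ℕ)+1, hi⟩ : Fin n) then 1 else 0) := by
    intro k
    rw [uvec_apply]
    simp only [Fin.ext_iff, smul_eq_mul]
    split_ifs <;> first | omega | ring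
  rw [Finset.sum_congr rfl fun k _ => h k, Finset.sum_add_distrib,
    Finset.sum_ite_eq' Finset.univ, Finset.sum_ite_eq' Finset.univ]
  norm_num

lemma polar_uvec {n : ℕ} (i j : Fin (n-1)) :
    QuadraticMap.polar (Qf n) (uvec i) (uvec j) =
      ∑ k : Fin n, 2 * (uvec i k * uvec j k) := by
  simp only [QuadraticMap.polar, Qf, QuadraticMap.weightedSumSquares_apply, Pi.add_apply]
  rw [← Finset.sum_sub_distrib, ← Finset.sum_sub_distrib]
  refine Finset.sum_congr rfl fun k _ => ?_
  simp only [smul_eq_mul]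
  ring

lemma polar_uvec_far {n : ℕ} (i j : Fin (n-1)) (hij : (i:ℕ)+2 ≤ (j:ℕ) ∨ (j:ℕ)+2 ≤ (i:ℕ)) :
    QuadraticMap.polar (Qf n) (uvec i) (uvec j) = 0 := by
  rw [polar_uvec]
  refine Finset.sum_eq_zero fun k _ => ?_
  rw [uvec_apply, uvec_apply]
  split_ifs <;> first | omega | ring

lemma polar_uvec_near {n : ℕ} (i j : Fin (n-1)) (hij : (j:ℕ) = (i:ℕ)+1) :
    QuadraticMap.polar (Qf n) (uvec i) (uvec j) = -2 := by
  have hi : (i:ℕ) + 1 < n := by omega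
  rw [polar_uvec]
  have h : ∀ k : Fin n, 2 * (uvec i k * uvec j k)
      = if k = (⟨(i:ℕ)+1, hi⟩ : Fin n) then -2 else 0 := by
    intro k
    rw [uvec_apply, uvec_apply, hij]
    simp only [Fin.ext_iff]
    split_ifs <;> first | omega | ring
  rw [Finset.sum_congr rfl fun k _ => h k, Finset.sum_ite_eq' Finset.univ]
  simp

noncomputable def uE {n : ℕ} (i : Fin (n-1)) : CliffordAlgebra (Qf n) := ι (Qf n) (uvec i)

lemma uE_sq {n : ℕ} (i : Fin (n-1)) : uE i * uE i = algebraMap ℚ _ 2 := by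
  rw [uE, ι_sq_scalar, Qf_uvec]

lemma uE_isUnit {n : ℕ} (i : Fin (n-1)) : IsUnit (uE (n := n) i) := by
  have h : uE i * ((2:ℚ)⁻¹ • uE i) = 1 := by
    rw [mul_smul_comm, uE_sq, Algebra.smul_def, ← map_mul]
    norm_num
  have h' : ((2:ℚ)⁻¹ • uE i) * uE i = 1 := by
    rw [smul_mul_assoc, uE_sq, Algebra.smul_def, ← map_mul]
    norm_num
  exact ⟨⟨uE i, (2:ℚ)⁻¹ • uE i, h, h'⟩, rfl⟩

lemma uE_anticomm {n : ℕ} (i j : Fin (n-1)) (hij : (i:ℕ)+2 ≤ (j:ℕ) ∨ (j:ℕ)+2 ≤ (i:ℕ)) :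
    uE (n := n) i * uE j = -(uE j * uE i) := by
  have h := ι_mul_ι_add_swap (Q := Qf n) (uvec i) (uvec j)
  rw [polar_uvec_far i j hij, map_zero] at h
  exact eq_neg_of_add_eq_zero_left h

lemma uE_braid' {n : ℕ} (i j : Fin (n-1)) (hij : (j:ℕ) = (i:ℕ)+1) :
    uE (n := n) i * uE j * uE i = uE j * uE i * uE j := by
  set A : CliffordAlgebra (Qf n) := algebraMap ℚ _ 2 with hA
  have h1 := ι_mul_ι_add_swap (Q := Qf n) (uvec i) (uvec j)
  rw [polar_uvec_near i j hij] at h1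
  have hC : (algebraMap ℚ (CliffordAlgebra (Qf n))) (-2) = -A := by
    rw [hA, ← map_neg]
  rw [hC] at h1
  change uE i * uE j + uE j * uE i = -A at h1
  have h2 : uE (n := n) i * uE j = -A - uE j * uE i := by
    rw [eq_sub_iff_add_eq]; exact h1
  have h3 : uE (n := n) j * uE i = -A - uE i * uE j := by
    rw [eq_sub_iff_add_eq, add_comm]; exact h1
  calc uE (n := n) i * uE j * uE i = (-A - uE j * uE i) * uE i := by rw [h2]
    _ = -A * uE i - uE j * (uE i * uE i) := by rw [sub_mul, mul_assoc]
    _ = -A * uE i - uE j * A := by rw [uE_sq]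
    _ = -A * uE i - A * uE j := by rw [hA, ← Algebra.commutes]
    _ = -A * uE j - uE i * A := by
        have hc : uE (n := n) i * A = A * uE i := by
          rw [hA]; exact (Algebra.commutes _ _).symm
        rw [hc]; simp only [neg_mul]; abel
    _ = -A * uE j - uE i * (uE j * uE j) := by rw [uE_sq]
    _ = (-A - uE i * uE j) * uE j := by rw [sub_mul, mul_assoc]
    _ = uE j * uE i * uE j := by rw [← h3]

lemma uE_braid {n : ℕ} (i j : Fin (n-1)) (hij : (j:ℕ) = (i:ℕ)+1 ∨ (i:ℕ) = (j:ℕ)+1) :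
    uE (n := n) i * uE j * uE i = uE j * uE i * uE j := by
  rcases hij with h | h
  · exact uE_braid' i j h
  · exact (uE_braid' j i h).symm

noncomputable def Pw {n : ℕ} (w : List (Fin (n-1))) : CliffordAlgebra (Qf n) :=
  (w.map uE).prod

lemma Pw_append {n : ℕ} (u v : List (Fin (n-1))) : Pw (u ++ v) = Pw u * Pw v := by
  simp [Pw]

lemma Pw_isUnit {n : ℕ} (w : List (Fin (n-1))) : IsUnit (Pw w) := by
  induction w with
  | nil => simp [Pw]
  | cons a t ih =>
    rw [show a :: t = [a] ++ t from rfl, Pw_append]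
    exact ((by simpa [Pw] using uE_isUnit a : IsUnit (Pw [a]))).mul ih

lemma Pw_hex {n : ℕ} {w w' : List (Fin (n-1))} (h : HexMove w w') : Pw w = Pw w' := by
  obtain ⟨l, r, i, j, hij, rfl, rfl⟩ := h
  rw [Pw_append, Pw_append, Pw_append, Pw_append]
  congr 2
  have : Pw [i, j, i] = uE i * uE j * uE i := by simp [Pw, mul_assoc]
  have h2 : Pw [j, i, j] = uE j * uE i * uE j := by simp [Pw, mul_assoc]
  rw [this, h2, uE_braid i j hij]

lemma Pw_sq {n : ℕ} {w w' : List (Fin (n-1))} (h : SqMove w w') : Pw w = -Pw w' := by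
  obtain ⟨l, r, i, j, hij, rfl, rfl⟩ := h
  rw [Pw_append, Pw_append, Pw_append, Pw_append]
  have : Pw [i, j] = uE i * uE j := by simp [Pw]
  have h2 : Pw [j, i] = uE j * uE i := by simp [Pw]
  rw [this, h2, uE_anticomm i j hij]
  simp [mul_assoc]

lemma Pw_moveSeq {n : ℕ} {w w' : List (Fin (n-1))} {m : ℕ} (h : MoveSeq w w' m) :
    Pw w = (-1 : CliffordAlgebra (Qf n))^m * Pw w' := by
  induction h with
  | refl w => simp
  | hex hh _ ih => rw [Pw_hex hh, ih]
  | sq hs _ ih =>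
    rw [Pw_sq hs, ih, pow_succ, mul_neg, mul_one, neg_mul]


end Aux

/-- For any two sequences of hexagonal and square moves transforming a reduced word `w`
of `σ ∈ S_n` into another reduced word `w'`, the number of square moves used has the
same parity. -/

theorem square_moves_parity_invariant (n : ℕ) (σ : Equiv.Perm (Fin n))
    (w w' : List (Fin (n - 1))) (hw : IsReducedWord σ w) (hw' : IsReducedWord σ w')
    (m m' : ℕ) (h : MoveSeq w w' m) (h' : MoveSeq w w' m') :
    m % 2 = m' % 2 := by
  haveI : Invertible (2 : ℚ) := invertibleOfNonzero two_ne_zero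
  have key : ((-1 : CliffordAlgebra (Qf n))^m) * Pw w' = ((-1 : CliffordAlgebra (Qf n))^m') * Pw w' := by
    rw [← Pw_moveSeq h, ← Pw_moveSeq h']
  have key2 : ((-1 : CliffordAlgebra (Qf n))^m) = ((-1 : CliffordAlgebra (Qf n))^m') :=
    (Pw_isUnit w').mul_right_cancel key
  have key3 : ((-1 : ℚ)^m) = ((-1 : ℚ)^m') := by
    have hinj : Function.Injective (algebraMap ℚ (CliffordAlgebra (Qf n))) :=
      RingHom.injective _
    apply hinj
    rw [map_pow, map_pow, map_neg, map_one]
    exact key2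
  rcases Nat.even_or_odd m with hm | hm <;> rcases Nat.even_or_odd m' with hm' | hm'
  · rw [Nat.even_iff] at hm hm'; omega
  · rw [hm.neg_one_pow, hm'.neg_one_pow] at key3; norm_num at key3
  · rw [hm.neg_one_pow, hm'.neg_one_pow] at key3; norm_num at key3
  · rw [Nat.odd_iff] at hm hm'; omega
end
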